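/- arXiv:1803.04136 — 4 statements merged into one kernel-verified Lean document; each statement's English description precedes it below -/
import Mathlib

section
/- With $a_i(x)=\sum_{k\ne i}\alpha_{ik}/(x_i-x_k)$ on $\Delta_d$, $\alpha$ symmetric with nonnegative entries, for every $x\in\Delta_d$ and $y\in\mathbb{R}^d$ one has $\langle y, a'(x) y\rangle = -\sum_{k>l} \frac{\alpha_{kl}}{(x_k-x_l)^2}(y_k-y_l)^2 \le 0$; i.e., the Jacobian $a'(x)$ is negative semi-definite. -/
/-!
The derivative of `α i k / (x i - x k)` in direction `y` is `-α i k (y i - y k) / (x i - x k)²`.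
In `⟨y, a'(x) y⟩` the terms for `(i, k)` and `(k, i)` pair up, by symmetry of `α`, into
`-α i k (y i - y k)² / (x i - x k)²`, which is nonpositive.
-/

open Finset

variable {ι : Type*} [Fintype ι]

theorem hasFDerivAt_const_div_sub (c : ℝ) {x : ι → ℝ} {i k : ι} (h : x i ≠ x k) :
    HasFDerivAt (fun v : ι → ℝ => c / (v i - v k))
      (-(c / (x i - x k) ^ 2) •
        (ContinuousLinearMap.proj (R := ℝ) (φ := fun _ : ι => ℝ) i -
          ContinuousLinearMap.proj k)) x := by
  have hinv : HasDerivAt (fun t : ℝ => c / t) (-(c / (x i - x k) ^ 2)) (x i - x k) := by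
    convert (hasDerivAt_inv (sub_ne_zero.mpr h)).const_mul c using 1 <;> first | rfl | ring
  exact hinv.comp_hasFDerivAt x
    (ContinuousLinearMap.proj (R := ℝ) (φ := fun _ : ι => ℝ) i -
      ContinuousLinearMap.proj k).hasFDerivAt

theorem fderiv_sum_const_div_sub_apply (c : ι → ℝ) (s : Finset ι) {x : ι → ℝ} {i : ι}
    (hx : ∀ k ∈ s, x i ≠ x k) (y : ι → ℝ) :
    fderiv ℝ (fun v : ι → ℝ => ∑ k ∈ s, c k / (v i - v k)) x y
      = -∑ k ∈ s, c k / (x i - x k) ^ 2 * (y i - y k) := by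
  rw [(HasFDerivAt.fun_sum fun k hk => hasFDerivAt_const_div_sub (c k) (hx k hk)).fderiv]
  simp [sum_neg_distrib]

theorem sum_sum_erase_eq_sum_sum_Iio_add [LinearOrder ι] [LocallyFiniteOrderBot ι]
    {M : Type*} [AddCommMonoid M] (f : ι → ι → M) :
    ∑ i, ∑ k ∈ univ.erase i, f i k = ∑ k, ∑ l ∈ Iio k, (f k l + f l k) := by
  have hsplit : ∀ i, univ.erase i = Iio i ∪ ({k | i < k} : Finset ι) := fun i => by
    ext k; simp [← lt_or_lt_iff_ne, eq_comm, or_comm]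
  have hswap : ∑ i, ∑ k ∈ ({k | i < k} : Finset ι), f i k = ∑ k, ∑ l ∈ Iio k, f l k :=
    sum_comm' fun i k => by simp
  have hdisj : ∀ i, Disjoint (Iio i) ({k | i < k} : Finset ι) := fun i =>
    disjoint_left.mpr fun k h₁ h₂ => by simp_all [lt_asymm]
  simp_rw [hsplit, sum_union (hdisj _), sum_add_distrib, hswap]

theorem sum_mul_neg_sum_erase_eq_neg_sum_Iio [LinearOrder ι] [LocallyFiniteOrderBot ι]
    {α : ι → ι → ℝ} (hα : ∀ i j, α i j = α j i) (x y : ι → ℝ) :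
    ∑ i, y i * -∑ k ∈ univ.erase i, α i k / (x i - x k) ^ 2 * (y i - y k)
      = -∑ k, ∑ l ∈ Iio k, α k l / (x k - x l) ^ 2 * (y k - y l) ^ 2 := by
  simp_rw [mul_neg, sum_neg_distrib, mul_sum, sum_sum_erase_eq_sum_sum_Iio_add]
  congr! 3 with k - l -
  rw [hα l k, show (x l - x k) ^ 2 = (x k - x l) ^ 2 by ring]
  ring

theorem jacobian_negative_semidefinite (d : ℕ) (α : Fin d → Fin d → ℝ)
    (hsymm : ∀ i j, α i j = α j i) (hnonneg : ∀ i j, 0 ≤ α i j)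
    (x : Fin d → ℝ) (hx : ∀ i j : Fin d, i < j → x i < x j)
    (a : Fin d → (Fin d → ℝ) → ℝ)
    (ha : ∀ i y, a i y = ∑ k ∈ univ.erase i, α i k / (y i - y k))
    (y : Fin d → ℝ) :
    (∑ i, y i * fderiv ℝ (a i) x y
        = -∑ k, ∑ l ∈ Iio k, α k l / (x k - x l) ^ 2 * (y k - y l) ^ 2) ∧
    ∑ i, y i * fderiv ℝ (a i) x y ≤ 0 := by
  have hderiv : ∀ i, fderiv ℝ (a i) x y
      = -∑ k ∈ univ.erase i, α i k / (x i - x k) ^ 2 * (y i - y k) := fun i => by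
    rw [show a i = _ from funext (ha i)]
    exact fderiv_sum_const_div_sub_apply _ _
      (fun k hk => (StrictMono.injective hx).ne (ne_of_mem_erase hk).symm) y
  have hform := sum_mul_neg_sum_erase_eq_neg_sum_Iio hsymm x y
  simp_rw [← hderiv] at hform
  refine ⟨hform, hform ▸ neg_nonpos.mpr (sum_nonneg fun k _ => sum_nonneg fun l _ => ?_)⟩
  exact mul_nonneg (div_nonneg (hnonneg k l) (sq_nonneg _)) (sq_nonneg _)
end

section
/- Under the assumptions of the previous statement, for every $\xi\in\mathbb{R}$ one has $\xi\,\phi^{(\epsilon)}(\xi)\le\alpha$. In particular $\phi^{(\epsilon)}(\xi)\ge 0$ for $\xi\le 0$. -/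
theorem phiEps_mul_le (α ε : ℝ) (hα : 0 ≤ α) (hε : 0 < ε) (hε1 : ε < 1)
    (ρ : ℝ → ℝ) (hρ_smooth : ContDiff ℝ (⊤ : ℕ∞) ρ) (hρ_mono : Monotone ρ)
    (hρ_id : ∀ ξ : ℝ, ε ≤ ξ → ρ ξ = ξ)
    (hρ_ge : ∀ ξ : ℝ, 0 < ξ → ξ ≤ ρ ξ)
    (hρ_const : ∀ ξ : ℝ, ξ ≤ 0 → ρ ξ = ρ 0) (hρ0 : 0 < ρ 0)
    (φε : ℝ → ℝ)
    (hφε : ∀ ξ : ℝ, φε ξ = α / ε + ∫ η in ε..ξ, -α / (ρ η) ^ 2) :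
    (∀ ξ : ℝ, ξ * φε ξ ≤ α) ∧ (∀ ξ : ℝ, ξ ≤ 0 → 0 ≤ φε ξ) := by
  have hρ0le : ∀ η : ℝ, ρ 0 ≤ ρ η := by
    intro η
    rcases le_or_gt η 0 with h | h
    · rw [hρ_const η h]
    · exact hρ_mono h.le
  have hρpos : ∀ η : ℝ, 0 < ρ η := fun η => lt_of_lt_of_le hρ0 (hρ0le η)
  have hcont : Continuous (fun η : ℝ => -α / (ρ η) ^ 2) := by
    apply Continuous.div continuous_const (hρ_smooth.continuous.pow 2)
    intro x
    exact pow_ne_zero 2 (hρpos x).ne'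
  -- FTC for the model integrand
  have hFTC : ∀ a b : ℝ, 0 < a → 0 < b →
      (∫ η in a..b, -α / η ^ 2) = α / b - α / a := by
    intro a b ha hb
    have h0 : ∀ x ∈ Set.uIcc a b, x ≠ 0 := by
      intro x hx
      have h1 : min a b ≤ x := hx.1
      have : (0 : ℝ) < x := lt_of_lt_of_le (lt_min ha hb) h1
      exact this.ne'
    have hint : IntervalIntegrable (fun η : ℝ => -α / η ^ 2) MeasureTheory.volume a b := by
      apply ContinuousOn.intervalIntegrable
      apply ContinuousOn.div continuousOn_const (continuousOn_pow 2)
      intro x hx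
      exact pow_ne_zero 2 (h0 x hx)
    rw [intervalIntegral.integral_eq_sub_of_hasDerivAt (f := fun x : ℝ => α * x⁻¹)
      (fun x hx => ?_) hint]
    · simp [div_eq_mul_inv]
    · have hd := (hasDerivAt_inv (h0 x hx)).const_mul α
      convert hd using 1
      exacts [rfl, by ring]
  -- lower bound for ξ ≤ ε
  have hphi_ge : ∀ ξ : ℝ, ξ ≤ ε → α / ε ≤ φε ξ := by
    intro ξ hξ
    rw [hφε, intervalIntegral.integral_symm ξ ε]
    have hnn : (0 : ℝ) ≤ ∫ η in ξ..ε, α / (ρ η) ^ 2 := by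
      apply intervalIntegral.integral_nonneg hξ
      intro x hx
      exact div_nonneg hα (pow_pos (hρpos x) 2).le
    have hneg : (∫ η in ξ..ε, -α / (ρ η) ^ 2) = -∫ η in ξ..ε, α / (ρ η) ^ 2 := by
      rw [← intervalIntegral.integral_neg]
      simp [neg_div]
    linarith
  -- upper bound for 0 < ξ < ε
  have key : ∀ ξ : ℝ, 0 < ξ → ξ < ε → φε ξ ≤ α / ξ := by
    intro ξ h0 hlt
    rw [hφε, intervalIntegral.integral_symm ξ ε]
    have hint1 : IntervalIntegrable (fun η : ℝ => -α / (ρ η) ^ 2)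
        MeasureTheory.volume ξ ε := hcont.intervalIntegrable _ _
    have hint2 : IntervalIntegrable (fun η : ℝ => -α / η ^ 2)
        MeasureTheory.volume ξ ε := by
      apply ContinuousOn.intervalIntegrable
      apply ContinuousOn.div continuousOn_const (continuousOn_pow 2)
      intro x hx
      have h1 : min ξ ε ≤ x := hx.1
      have : (0 : ℝ) < x := lt_of_lt_of_le (lt_min h0 hε) h1
      exact pow_ne_zero 2 this.ne'
    have hmono : (∫ η in ξ..ε, -α / η ^ 2) ≤ ∫ η in ξ..ε, -α / (ρ η) ^ 2 := by
      apply intervalIntegral.integral_mono_on hlt.le hint2 hint1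
      intro x hx
      have hx0 : 0 < x := h0.trans_le hx.1
      have hρx : x ≤ ρ x := hρ_ge x hx0
      have h1 : α / (ρ x) ^ 2 ≤ α / x ^ 2 :=
        div_le_div_of_nonneg_left hα (by positivity) (pow_le_pow_left₀ hx0.le hρx 2)
      have h2 := neg_le_neg h1
      simpa [neg_div] using h2
    have hval : (∫ η in ξ..ε, -α / η ^ 2) = α / ε - α / ξ := hFTC ξ ε h0 hε
    linarith
  -- equality for ξ ≥ ε
  have keq : ∀ ξ : ℝ, ε ≤ ξ → φε ξ = α / ξ := by
    intro ξ h
    rw [hφε]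
    have hcongr : (∫ η in ε..ξ, -α / (ρ η) ^ 2) = ∫ η in ε..ξ, -α / η ^ 2 := by
      apply intervalIntegral.integral_congr
      intro x hx
      rw [Set.uIcc_of_le h] at hx
      simp only
      rw [hρ_id x hx.1]
    rw [hcongr, hFTC ε ξ hε (hε.trans_le h)]
    ring
  constructor
  · intro ξ
    rcases le_or_gt ξ 0 with h | h
    · have hφ : 0 ≤ φε ξ := le_trans (by positivity) (hphi_ge ξ (h.trans hε.le))
      nlinarith
    · rcases lt_or_ge ξ ε with h2 | h2
      · have hk := key ξ h h2
        calc ξ * φε ξ ≤ ξ * (α / ξ) := by nlinarith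
          _ = α := by field_simp
      · rw [keq ξ h2]
        rw [mul_div_cancel₀ α (hε.trans_le h2).ne']
  · intro ξ hξ
    exact le_trans (by positivity) (hphi_ge ξ (hξ.trans hε.le))
end

section
/- Let $u_{i1}(x)=\sum_{k\ne i}\frac{1}{x_i-x_k}$ and $u_{i2}(x)=\sum_{k\ne i}\frac{1}{(x_i-x_k)^2}$ for $x\in\Delta_d$. Then $\sum_{i=1}^d u_{i1}(x)^2 = \sum_{i=1}^d u_{i2}(x)$. -/
open Finset

private lemma key3 (a b c : ℝ) (hab : a ≠ b) (hac : a ≠ c) (hbc : b ≠ c) :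
    ((a - b) * (a - c))⁻¹ + ((b - a) * (b - c))⁻¹ + ((c - a) * (c - b))⁻¹ = 0 := by
  have h1 : a - b ≠ 0 := sub_ne_zero.mpr hab
  have h2 : a - c ≠ 0 := sub_ne_zero.mpr hac
  have h3 : b - a ≠ 0 := sub_ne_zero.mpr hab.symm
  have h4 : b - c ≠ 0 := sub_ne_zero.mpr hbc
  have h5 : c - a ≠ 0 := sub_ne_zero.mpr hac.symm
  have h6 : c - b ≠ 0 := sub_ne_zero.mpr hbc.symm
  field_simp
  ring

theorem sum_sq_u1_eq_sum_u2 (d : ℕ) (x : Fin d → ℝ)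
    (hx : ∀ i j : Fin d, i < j → x i < x j) :
    ∑ i, (∑ k ∈ univ.erase i, (x i - x k)⁻¹) ^ 2
      = ∑ i, ∑ k ∈ univ.erase i, ((x i - x k) ^ 2)⁻¹ := by
  have hne : ∀ i k : Fin d, i ≠ k → x i ≠ x k := by
    intro i k h
    rcases lt_trichotomy i k with h' | h' | h'
    · exact ne_of_lt (hx i k h')
    · exact absurd h' h
    · exact ne_of_gt (hx k i h')
  set f : Fin d → Fin d → ℝ := fun i k => (x i - x k)⁻¹ with hf
  set g : Fin d × Fin d × Fin d → ℝ := fun p => f p.1 p.2.1 * f p.1 p.2.2 with hg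
  set T : Finset (Fin d × Fin d × Fin d) :=
    univ.filter (fun p => p.1 ≠ p.2.1 ∧ p.1 ≠ p.2.2 ∧ p.2.1 ≠ p.2.2) with hT
  have hmem : ∀ p : Fin d × Fin d × Fin d, p ∈ T ↔
      p.1 ≠ p.2.1 ∧ p.1 ≠ p.2.2 ∧ p.2.1 ≠ p.2.2 := by
    intro p; simp [hT]
  -- the triple sum vanishes
  have hS : ∑ p ∈ T, g p = 0 := by
    have h1 : ∑ p ∈ T, g p = ∑ p ∈ T, g (p.2.1, p.1, p.2.2) := by
      apply Finset.sum_nbij' (fun p => (p.2.1, p.1, p.2.2)) (fun p => (p.2.1, p.1, p.2.2))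
      · intro p hp; rw [hmem] at hp ⊢; tauto
      · intro p hp; rw [hmem] at hp ⊢; tauto
      · intro p _; rfl
      · intro p _; rfl
      · intro p _; rfl
    have h2 : ∑ p ∈ T, g p = ∑ p ∈ T, g (p.2.2, p.1, p.2.1) := by
      apply Finset.sum_nbij' (fun p => (p.2.1, p.2.2, p.1)) (fun p => (p.2.2, p.1, p.2.1))
      · intro p hp; rw [hmem] at hp ⊢; tauto
      · intro p hp; rw [hmem] at hp ⊢; tauto
      · intro p _; rfl
      · intro p _; rfl
      · intro p _; rfl
    have h3 : (3 : ℝ) * ∑ p ∈ T, g p = 0 := by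
      have h4 : (3 : ℝ) * ∑ p ∈ T, g p
          = ∑ p ∈ T, (g p + g (p.2.1, p.1, p.2.2) + g (p.2.2, p.1, p.2.1)) := by
        rw [Finset.sum_add_distrib, Finset.sum_add_distrib, ← h1, ← h2]; ring
      rw [h4]
      apply Finset.sum_eq_zero
      intro p hp
      rw [hmem] at hp
      have := key3 (x p.1) (x p.2.1) (x p.2.2) (hne _ _ hp.1) (hne _ _ hp.2.1) (hne _ _ hp.2.2)
      rw [mul_inv, mul_inv, mul_inv] at this
      simpa [hg, hf] using this
    linarith
  -- rewrite triple sum as nested sums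
  have hSnest : ∑ p ∈ T, g p
      = ∑ i, ∑ k ∈ univ.erase i, ∑ l ∈ (univ.erase i).erase k, f i k * f i l := by
    rw [hT, Finset.sum_filter, Fintype.sum_prod_type]
    refine Finset.sum_congr rfl fun i _ => ?_
    rw [Fintype.sum_prod_type]
    rw [show (∑ k, ∑ l, if i ≠ k ∧ i ≠ l ∧ k ≠ l then g (i, k, l) else 0)
        = ∑ k ∈ univ.erase i, ∑ l, if i ≠ k ∧ i ≠ l ∧ k ≠ l then g (i, k, l) else 0 from
      (Finset.sum_erase _ (by simp)).symm]
    refine Finset.sum_congr rfl fun k hk => ?_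
    have hik : i ≠ k := (Finset.ne_of_mem_erase hk).symm
    rw [← Finset.sum_filter]
    have hset : (univ.filter (fun l => i ≠ k ∧ i ≠ l ∧ k ≠ l))
        = (univ.erase i).erase k := by
      ext l
      simp only [Finset.mem_filter, Finset.mem_erase, Finset.mem_univ, and_true, true_and]
      constructor
      · rintro ⟨_, h2, h3⟩; exact ⟨h3.symm, h2.symm⟩
      · rintro ⟨h2, h3⟩; exact ⟨hik, h3.symm, h2.symm⟩
    rw [hset]
  -- expand the square
  have hexp : ∀ i : Fin d, (∑ k ∈ univ.erase i, f i k) ^ 2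
      = (∑ k ∈ univ.erase i, ((x i - x k) ^ 2)⁻¹)
        + ∑ k ∈ univ.erase i, ∑ l ∈ (univ.erase i).erase k, f i k * f i l := by
    intro i
    rw [sq, Finset.sum_mul_sum, ← Finset.sum_add_distrib]
    refine Finset.sum_congr rfl fun k hk => ?_
    rw [← Finset.add_sum_erase _ _ hk]
    congr 1
    rw [hf]; rw [sq, mul_inv]
  calc ∑ i, (∑ k ∈ univ.erase i, (x i - x k)⁻¹) ^ 2
      = ∑ i, ((∑ k ∈ univ.erase i, ((x i - x k) ^ 2)⁻¹)
        + ∑ k ∈ univ.erase i, ∑ l ∈ (univ.erase i).erase k, f i k * f i l) := by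
        exact Finset.sum_congr rfl fun i _ => hexp i
    _ = (∑ i, ∑ k ∈ univ.erase i, ((x i - x k) ^ 2)⁻¹) + ∑ p ∈ T, g p := by
        rw [Finset.sum_add_distrib, hSnest]
    _ = ∑ i, ∑ k ∈ univ.erase i, ((x i - x k) ^ 2)⁻¹ := by rw [hS, add_zero]
end

section
/- Let $F(x)=\sum_{k>l}\log(x_k-x_l)$ on $\Delta_d$. Then $\partial F/\partial x_i(x)=\sum_{k\ne i}(x_i-x_k)^{-1}$ and $\partial^2 F/\partial x_i^2(x)=-\sum_{k\ne i}(x_i-x_k)^{-2}$; consequently the Laplacian of $F$ equals $-\sum_i\left(\sum_{k\ne i}(x_i-x_k)^{-1}\right)^2$, i.e. $\Delta F = -|\nabla F|^2$ on $\Delta_d$. -/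
/-!
Differentiating `log (y k - y l)` term by term, the `i`-th partial derivative of
`F = ∑_{l < k} log (y k - y l)` collects `(y i - y l)⁻¹` from the pairs with `k = i` and
`-(y k - y i)⁻¹ = (y i - y k)⁻¹` from those with `l = i`, giving `∑_{k ≠ i} (y i - y k)⁻¹`;
this holds on the open set of injective `y`, so it can be differentiated once more.
For the Laplacian, expanding the square leaves the cross terms `(x i - x k)⁻¹ (x i - x m)⁻¹`
over distinct triples, and these cancel in threes: their cyclic sum vanishes identically.
-/

open Finset

theorem isOpen_setOf_injective {X κ : Type*} [TopologicalSpace X] [T2Space X] [Finite κ] :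
    IsOpen {y : κ → X | Function.Injective y} := by
  have : {y : κ → X | Function.Injective y} = ⋂ (i) (j) (_ : i ≠ j), {y : κ → X | y i ≠ y j} := by
    ext y
    simp only [Set.mem_ofPred_eq, Set.mem_iInter]
    exact ⟨fun hy i j hij => hy.ne hij, fun hy i j => not_imp_not.1 (hy i j)⟩
  rw [this]
  exact isOpen_iInter_of_finite fun i => isOpen_iInter_of_finite fun j =>
    isOpen_iInter_of_finite fun _ => isOpen_ne_fun (continuous_apply i) (continuous_apply j)

theorem hasFDerivAt_comp_sub_apply {ι : Type*} [Fintype ι] {φ : ℝ → ℝ} {φ' : ℝ} {y : ι → ℝ}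
    {k l : ι} (hφ : HasDerivAt φ φ' (y k - y l)) :
    HasFDerivAt (fun z : ι → ℝ => φ (z k - z l))
      (φ' • ((ContinuousLinearMap.proj k : (ι → ℝ) →L[ℝ] ℝ) - ContinuousLinearMap.proj l)) y :=
  hφ.comp_hasFDerivAt y ((hasFDerivAt_apply k y).sub (hasFDerivAt_apply l y))

theorem sum_sum_Iio_mul_single_sub_single {ι R : Type*} [Fintype ι] [LinearOrder ι]
    [LocallyFiniteOrderBot ι] [CommRing R] (c : ι → ι → R) (hc : ∀ k l, c l k = -c k l) (i : ι) :
    ∑ k, ∑ l ∈ Iio k, c k l * ((Pi.single i 1 : ι → R) k - (Pi.single i 1 : ι → R) l)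
      = ∑ k ∈ univ.erase i, c i k := by
  have hrow : ∑ k, ∑ l ∈ Iio k, c k l * (Pi.single i 1 : ι → R) k = ∑ k ∈ Iio i, c i k := by
    simp [Pi.single_apply]
  have hcol : ∑ k, ∑ l ∈ Iio k, c k l * (Pi.single i 1 : ι → R) l = -∑ k with i < k, c i k := by
    simp [Pi.single_apply, sum_ite, hc i]
  have hsplit : univ.erase i = Iio i ∪ univ.filter (i < ·) := by
    ext k; simp
  have hdisj : Disjoint (Iio i) (univ.filter (i < ·)) :=
    disjoint_left.2 fun k hk hk' => lt_asymm (mem_Iio.1 hk) (mem_filter.1 hk').2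
  calc ∑ k, ∑ l ∈ Iio k, c k l * ((Pi.single i 1 : ι → R) k - (Pi.single i 1 : ι → R) l)
      = ∑ k, ∑ l ∈ Iio k, c k l * (Pi.single i 1 : ι → R) k
        - ∑ k, ∑ l ∈ Iio k, c k l * (Pi.single i 1 : ι → R) l := by
        simp only [mul_sub, sum_sub_distrib]
    _ = ∑ k ∈ Iio i, c i k + ∑ k with i < k, c i k := by rw [hrow, hcol, sub_neg_eq_add]
    _ = ∑ k ∈ univ.erase i, c i k := by rw [hsplit, sum_union hdisj]

theorem inv_sub_mul_inv_sub_add_cyclic {K : Type*} [Field K] {a b c : K} (hab : a ≠ b)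
    (hac : a ≠ c) (hbc : b ≠ c) :
    (a - b)⁻¹ * (a - c)⁻¹ + (b - c)⁻¹ * (b - a)⁻¹ + (c - a)⁻¹ * (c - b)⁻¹ = 0 := by
  have := sub_ne_zero.2 hab; have := sub_ne_zero.2 hac; have := sub_ne_zero.2 hbc
  field_simp
  ring

section Cyclic

variable {ι K : Type*} [Fintype ι] [Field K]

theorem sum_comm_cyclic {M : Type*} [AddCommMonoid M] (f : ι → ι → ι → M) :
    ∑ i, ∑ k, ∑ m, f k m i = ∑ i, ∑ k, ∑ m, f i k m := by
  rw [sum_comm]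
  exact sum_congr rfl fun _ _ => sum_comm

theorem sum_eq_zero_of_add_cyclic [CharZero K] (f : ι → ι → ι → K)
    (hf : ∀ i k m, f i k m + f k m i + f m i k = 0) : ∑ i, ∑ k, ∑ m, f i k m = 0 := by
  have h3 : 3 * ∑ i, ∑ k, ∑ m, f i k m = 0 :=
    calc 3 * ∑ i, ∑ k, ∑ m, f i k m
        = ∑ i, ∑ k, ∑ m, f i k m + ∑ i, ∑ k, ∑ m, f k m i + ∑ i, ∑ k, ∑ m, f m i k := by
          rw [sum_comm_cyclic f, ← sum_comm_cyclic fun a b c => f c a b]; ring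
      _ = 0 := by simp only [← sum_add_distrib, hf, sum_const_zero]
  simpa using h3

theorem sum_sq_sum_eq_sum_sum_sq_of_add_cyclic [DecidableEq ι] [CharZero K] (a : ι → ι → K)
    (hdiag : ∀ i, a i i = 0)
    (hcyc : ∀ i k m, i ≠ k → k ≠ m → m ≠ i → a i k * a i m + a k m * a k i + a m i * a m k = 0) :
    ∑ i, (∑ k, a i k) ^ 2 = ∑ i, ∑ k, a i k ^ 2 := by
  let t i k m := if k = m then 0 else a i k * a i m
  have hexpand : ∀ i, (∑ k, a i k) ^ 2 = ∑ k, a i k ^ 2 + ∑ k, ∑ m, t i k m := by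
    intro i
    rw [sq, sum_mul_sum, ← sum_add_distrib]
    refine sum_congr rfl fun k _ => ?_
    have hsplit : ∀ m, a i k * a i m = (if k = m then a i k * a i m else 0) + t i k m := by
      intro m; simp only [t]; split_ifs <;> simp
    rw [sum_congr rfl fun m _ => hsplit m, sum_add_distrib, sum_ite_eq, if_pos (mem_univ _), sq]
  -- Outside distinct triples every product in the cyclic sum of `t` contains a diagonal `a j j`.
  have ht : ∀ i k m, t i k m + t k m i + t m i k = 0 := by
    intro i k m
    by_cases hkm : k = m
    · subst hkm; simp [t, hdiag]
    by_cases hmi : m = i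
    · subst hmi; simp [t, hdiag]
    by_cases hik : i = k
    · subst hik; simp [t, hdiag]
    simpa [t, hkm, hmi, hik] using hcyc i k m hik hkm hmi
  simp only [hexpand, sum_add_distrib, sum_eq_zero_of_add_cyclic t ht, add_zero]

theorem sum_sq_sum_inv_sub [DecidableEq ι] [CharZero K] {x : ι → K} (hx : Function.Injective x) :
    ∑ i, (∑ k ∈ univ.erase i, (x i - x k)⁻¹) ^ 2
      = ∑ i, ∑ k ∈ univ.erase i, ((x i - x k) ^ 2)⁻¹ := by
  -- Lean's `0⁻¹ = 0` lets the sums over `univ.erase i` be taken over `univ`.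
  have hdiag : ∀ i, (x i - x i)⁻¹ = 0 := by simp
  have hdiag_sq : ∀ i, ((x i - x i) ^ 2)⁻¹ = 0 := by simp
  calc ∑ i, (∑ k ∈ univ.erase i, (x i - x k)⁻¹) ^ 2
      = ∑ i, (∑ k, (x i - x k)⁻¹) ^ 2 := sum_congr rfl fun i _ => by
        rw [sum_erase (f := fun k => (x i - x k)⁻¹) _ (hdiag i)]
    _ = ∑ i, ∑ k, (x i - x k)⁻¹ ^ 2 :=
      sum_sq_sum_eq_sum_sum_sq_of_add_cyclic _ hdiag fun i k m hik hkm hmi =>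
        inv_sub_mul_inv_sub_add_cyclic (hx.ne hik) (hx.ne hmi.symm) (hx.ne hkm)
    _ = ∑ i, ∑ k ∈ univ.erase i, ((x i - x k) ^ 2)⁻¹ := sum_congr rfl fun i _ => by
        rw [sum_erase (f := fun k => ((x i - x k) ^ 2)⁻¹) _ (hdiag_sq i)]
        simp only [inv_pow]

end Cyclic

theorem hasFDerivAt_sum_inv_sub {ι : Type*} [Fintype ι] [DecidableEq ι] {y : ι → ℝ}
    (hy : Function.Injective y) (i : ι) :
    HasFDerivAt (fun z : ι → ℝ => ∑ k ∈ univ.erase i, (z i - z k)⁻¹)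
      (∑ k ∈ univ.erase i, -((y i - y k) ^ 2)⁻¹ •
        ((ContinuousLinearMap.proj i : (ι → ℝ) →L[ℝ] ℝ) - ContinuousLinearMap.proj k)) y :=
  HasFDerivAt.fun_sum fun _ hk => hasFDerivAt_comp_sub_apply <|
    hasDerivAt_inv <| sub_ne_zero.2 <| hy.ne (ne_of_mem_erase hk).symm

section LogVandermonde

variable {ι : Type*} [Fintype ι] [LinearOrder ι] [LocallyFiniteOrderBot ι]

noncomputable def logVandermonde (y : ι → ℝ) : ℝ := ∑ k, ∑ l ∈ Iio k, Real.log (y k - y l)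

theorem hasFDerivAt_logVandermonde {y : ι → ℝ} (hy : Function.Injective y) :
    HasFDerivAt logVandermonde (∑ k, ∑ l ∈ Iio k, (y k - y l)⁻¹ •
      ((ContinuousLinearMap.proj k : (ι → ℝ) →L[ℝ] ℝ) - ContinuousLinearMap.proj l)) y :=
  HasFDerivAt.fun_sum fun _ _ => HasFDerivAt.fun_sum fun _ hl => hasFDerivAt_comp_sub_apply <|
    Real.hasDerivAt_log <| sub_ne_zero.2 <| hy.ne (mem_Iio.1 hl).ne'

theorem fderiv_logVandermonde_single {y : ι → ℝ} (hy : Function.Injective y) (i : ι) :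
    fderiv ℝ logVandermonde y (Pi.single i 1) = ∑ k ∈ univ.erase i, (y i - y k)⁻¹ := by
  rw [(hasFDerivAt_logVandermonde hy).fderiv]
  simp only [_root_.sum_apply, _root_.smul_apply, _root_.sub_apply,
    ContinuousLinearMap.proj_apply, smul_eq_mul]
  exact sum_sum_Iio_mul_single_sub_single _ (fun _ _ => by rw [← inv_neg, neg_sub]) i

theorem fderiv_fderiv_logVandermonde_single {y : ι → ℝ} (hy : Function.Injective y) (i : ι) :
    fderiv ℝ (fun z => fderiv ℝ logVandermonde z (Pi.single i 1)) y (Pi.single i 1)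
      = -∑ k ∈ univ.erase i, ((y i - y k) ^ 2)⁻¹ := by
  have hnear : (fun z => fderiv ℝ logVandermonde z (Pi.single i 1))
      =ᶠ[nhds y] fun z => ∑ k ∈ univ.erase i, (z i - z k)⁻¹ :=
    Filter.eventuallyEq_of_mem (isOpen_setOf_injective.mem_nhds hy)
      fun z hz => fderiv_logVandermonde_single hz i
  rw [hnear.fderiv_eq, (hasFDerivAt_sum_inv_sub hy i).fderiv]
  simp only [_root_.sum_apply, _root_.smul_apply, _root_.sub_apply,
    ContinuousLinearMap.proj_apply, smul_eq_mul, ← sum_neg_distrib]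
  exact sum_congr rfl fun k hk => by simp [ne_of_mem_erase hk]

end LogVandermonde

theorem log_vandermonde_derivatives (d : ℕ)
    (F : (Fin d → ℝ) → ℝ)
    (hF : ∀ y : Fin d → ℝ, F y = ∑ k, ∑ l ∈ Iio k, Real.log (y k - y l))
    (x : Fin d → ℝ) (hx : ∀ i j : Fin d, i < j → x i < x j) :
    (∀ i : Fin d, fderiv ℝ F x (Pi.single i 1)
        = ∑ k ∈ univ.erase i, (x i - x k)⁻¹) ∧
    (∀ i : Fin d, fderiv ℝ (fun y => fderiv ℝ F y (Pi.single i 1)) x (Pi.single i 1)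
        = -∑ k ∈ univ.erase i, ((x i - x k) ^ 2)⁻¹) ∧
    ∑ i, fderiv ℝ (fun y => fderiv ℝ F y (Pi.single i 1)) x (Pi.single i 1)
        = -∑ i, (∑ k ∈ univ.erase i, (x i - x k)⁻¹) ^ 2 := by
  obtain rfl : F = logVandermonde := funext hF
  have hinj : Function.Injective x := StrictMono.injective hx
  refine ⟨fderiv_logVandermonde_single hinj, fderiv_fderiv_logVandermonde_single hinj, ?_⟩
  rw [sum_congr rfl fun i _ => fderiv_fderiv_logVandermonde_single hinj i, sum_neg_distrib,
    sum_sq_sum_inv_sub hinj]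
end
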